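/- Geometric dyadic stacking lemma (parabolic Calderón–Zygmund): Let Q be a parabolic cube in ℝ^n × ℝ, m ∈ ℕ, and A, B ⊂ Q measurable subsets. Assume |A| ≤ δ|Q| for some δ ∈ (0,1), and assume that for every parabolic dyadic subcube K of Q, |K ∩ A| > δ|K| implies K̄^m ⊂ B, where K̄^m denotes the set obtained by stacking m copies of the predecessor of K in the time direction. Then |A| ≤ ((m+1)/m) δ |B|. -/

import Mathlib

/-!
Call a dyadic subcube `K` of `Q` heavy if `|K ∩ A| > δ |K|`. Almost every point of `A` lies in
a heavy cube: the maximal dyadic cubes inside an open set `U ⊇ A` show that the rest of `A`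
has measure at most `δ |U|`, hence at most `δ` times its own measure, and `δ < 1`. As `Q`
itself is not heavy, every heavy cube lies in the parent `K̄` of a maximal heavy cube; such a
parent is not heavy and satisfies `K̄^m ⊆ B`. The maximal ones among these parents are disjoint
cubes `K_j` covering `A` almost everywhere with `|A ∩ K_j| ≤ δ |K_j|`, so it remains to show
`∑ |K_j| ≤ (m + 1) / m * |⋃ K_j^m|` for disjoint cubes. On each time line, the intervals cut
out by the `K_j` that stick out of all the stacks have pairwise disjoint stacks, each of them
`m` times as long as its interval; this bounds the part of the `K_j` outside the stacks by
`|⋃ K_j^m| / m`.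
-/

open MeasureTheory

/-- A parabolic cube `L × (t, t + h²)` with spatial cube `∏ᵢ (xᵢ, xᵢ + h)`. -/
structure PCube (n : ℕ) where
  x : Fin n → ℝ
  h : ℝ
  t : ℝ

namespace PCube

variable {n : ℕ}

/-- The underlying set of a parabolic cube. -/
def toSet (K : PCube n) : Set ((Fin n → ℝ) × ℝ) :=
  {p | (∀ i, p.1 i ∈ Set.Ioo (K.x i) (K.x i + K.h)) ∧ p.2 ∈ Set.Ioo K.t (K.t + K.h ^ 2)}

/-- The `2^{n+2}` parabolic dyadic children: the spatial cube is halved in each direction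
and the time interval is split into four equal parts. -/
noncomputable def child (K : PCube n) (v : Fin n → Fin 2) (j : Fin 4) : PCube n :=
  ⟨fun i => K.x i + (v i : ℝ) * (K.h / 2), K.h / 2, K.t + (j : ℝ) * (K.h / 2) ^ 2⟩

/-- `K` is one of the dyadic children of `P`. -/
def isChild (P K : PCube n) : Prop := ∃ v j, K = P.child v j

/-- The set `K̄^m` obtained from a cube `P = L' × (a', b')` by stacking `m` copies of it
on top in time: `L' × (b', b' + m (b' - a'))`. -/
def stack (P : PCube n) (m : ℕ) : Set ((Fin n → ℝ) × ℝ) :=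
  {p | (∀ i, p.1 i ∈ Set.Ioo (P.x i) (P.x i + P.h)) ∧
    p.2 ∈ Set.Ioo (P.t + P.h ^ 2) (P.t + P.h ^ 2 + (m : ℝ) * P.h ^ 2)}

end PCube

open Set Function ENNReal

/-- If the stacks met, the interval with the higher top would lie inside the other stack. -/
lemma disjoint_Ioo_stack {t t' ℓ ℓ' c : ℝ}
    (hI : Disjoint (Ioo t (t + ℓ)) (Ioo t' (t' + ℓ')))
    (hy : ∃ y ∈ Ioo t (t + ℓ), y ∉ Ioo (t' + ℓ') (t' + ℓ' + c * ℓ'))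
    (hy' : ∃ y ∈ Ioo t' (t' + ℓ'), y ∉ Ioo (t + ℓ) (t + ℓ + c * ℓ)) :
    Disjoint (Ioo (t + ℓ) (t + ℓ + c * ℓ)) (Ioo (t' + ℓ') (t' + ℓ' + c * ℓ')) := by
  wlog hle : t + ℓ ≤ t' + ℓ' generalizing t t' ℓ ℓ'
  · exact (this hI.symm hy' hy (le_of_not_ge hle)).symm
  obtain ⟨_, ⟨hyt, hyℓ⟩, -⟩ := hy
  obtain ⟨y, ⟨hy₁, hy₂⟩, hyS⟩ := hy'
  rw [Ioo_disjoint_Ioo, min_eq_left hle] at hI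
  have ht' : t + ℓ ≤ t' := (le_max_iff.1 hI).resolve_left fun h => by linarith
  rw [Ioo_disjoint_Ioo, max_eq_right hle]
  by_contra! hlt
  exact hyS ⟨by linarith, by linarith [lt_min_iff.1 hlt]⟩

lemma tsum_volume_Ioo_sdiff_iUnion_le {ι : Type*} [Countable ι] {c : ℝ} (hc : 0 < c)
    (t ℓ : ι → ℝ) (hI : Pairwise (Disjoint on fun i => Ioo (t i) (t i + ℓ i))) :
    ∑' i, volume (Ioo (t i) (t i + ℓ i) \ ⋃ j, Ioo (t j + ℓ j) (t j + ℓ j + c * ℓ j)) ≤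
      (ENNReal.ofReal c)⁻¹ * volume (⋃ j, Ioo (t j + ℓ j) (t j + ℓ j + c * ℓ j)) := by
  set I : ι → Set ℝ := fun i => Ioo (t i) (t i + ℓ i)
  set S : ι → Set ℝ := fun i => Ioo (t i + ℓ i) (t i + ℓ i + c * ℓ i)
  set G : Set ι := {i | (I i \ ⋃ j, S j).Nonempty}
  have hS : Pairwise (Disjoint on fun i : G => S i) := by
    intro i j hij
    obtain ⟨y, hyI, hyS⟩ := i.2
    obtain ⟨y', hyI', hyS'⟩ := j.2
    refine disjoint_Ioo_stack (hI (Subtype.coe_ne_coe.2 hij)) ⟨y, hyI, ?_⟩ ⟨y', hyI', ?_⟩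
    · exact fun h => hyS (mem_iUnion_of_mem j.1 h)
    · exact fun h => hyS' (mem_iUnion_of_mem i.1 h)
  have hvol : ∀ i, volume (I i) = (ENNReal.ofReal c)⁻¹ * volume (S i) := fun i => by
    simp only [I, S, Real.volume_Ioo, add_sub_cancel_left, ENNReal.ofReal_mul hc.le]
    rw [ENNReal.inv_mul_cancel_left (by simpa using hc) ofReal_ne_top]
  calc ∑' i, volume (I i \ ⋃ j, S j)
      = ∑' i : G, volume (I i \ ⋃ j, S j) := by
        refine (tsum_subtype_eq_of_support_subset fun i hi => ?_).symm
        exact nonempty_iff_ne_empty.2 fun h => hi (by simp [h])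
    _ ≤ ∑' i : G, (ENNReal.ofReal c)⁻¹ * volume (S i) :=
        ENNReal.tsum_le_tsum fun i => (hvol i) ▸ measure_mono sdiff_subset
    _ = (ENNReal.ofReal c)⁻¹ * volume (⋃ i : G, S i) := by
        rw [ENNReal.tsum_mul_left, measure_iUnion hS fun _ => measurableSet_Ioo]
    _ ≤ (ENNReal.ofReal c)⁻¹ * volume (⋃ j, S j) := by
        gcongr; exact iUnion_subset fun i => subset_iUnion S i.1

lemma measure_le_mul_tsum_of_ae_subset_iUnion {α ι : Type*} [MeasurableSpace α]
    [Countable ι] {μ : Measure α} {s : ι → Set α} {A : Set α} {δ : ℝ≥0∞} (hA : A ≤ᵐ[μ] ⋃ i, s i)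
    (hδ : ∀ i, μ (s i ∩ A) ≤ δ * μ (s i)) : μ A ≤ δ * ∑' i, μ (s i) :=
  calc μ A ≤ μ (⋃ i, s i ∩ A) := measure_mono_ae <| hA.mono fun p hp hpA => by
          rw [← iUnion_inter]; exact ⟨hp hpA, hpA⟩
    _ ≤ ∑' i, μ (s i ∩ A) := measure_iUnion_le _
    _ ≤ ∑' i, δ * μ (s i) := ENNReal.tsum_le_tsum hδ
    _ = δ * ∑' i, μ (s i) := ENNReal.tsum_mul_left

lemma div_mem_Ioo_iff {x y s a : ℝ} (hs : 0 < s) :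
    (y - x) / s ∈ Ioo a (a + 1) ↔ y ∈ Ioo (x + a * s) (x + a * s + s) := by
  simp only [mem_Ioo, lt_div_iff₀ hs, div_lt_iff₀ hs]
  constructor <;> rintro ⟨h₁, h₂⟩ <;> constructor <;> linarith

lemma div_natCast_mem_Ioo {a N : ℕ} {u : ℝ} (hN : 0 < N) (hu : u ∈ Ioo (a : ℝ) (a + 1)) :
    u / N ∈ Ioo ((a / N : ℕ) : ℝ) ((a / N : ℕ) + 1) := by
  have hN' : (0 : ℝ) < N := Nat.cast_pos.2 hN
  have hlo : ((a / N : ℕ) : ℝ) * N ≤ a := by exact_mod_cast Nat.div_mul_le_self a N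
  have hhi : (a : ℝ) + 1 ≤ N * ((a / N : ℕ) + 1) := by
    exact_mod_cast Nat.lt_mul_div_succ a hN
  rw [mem_Ioo, lt_div_iff₀ hN', div_lt_iff₀ hN']
  constructor <;> nlinarith [hu.1, hu.2]

lemma mem_Ioo_floor {u : ℝ} (hu : 0 ≤ u) (hne : u ≠ ⌊u⌋₊) :
    u ∈ Ioo (⌊u⌋₊ : ℝ) (⌊u⌋₊ + 1) :=
  ⟨(Nat.floor_le hu).lt_of_ne' hne, Nat.lt_floor_add_one u⟩

/-- Address of a dyadic subcube of generation `level`: `pos` counts spatial steps of side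
`h / 2 ^ level` and `time` counts time steps of length `(h / 2 ^ level) ^ 2`. -/
@[ext]
structure DyadicIndex (n : ℕ) where
  level : ℕ
  pos : Fin n → ℕ
  time : ℕ

namespace DyadicIndex

variable {n : ℕ}

instance : Countable (DyadicIndex n) :=
  Injective.countable (f := fun d : DyadicIndex n => (d.level, d.pos, d.time))
    fun d e h => by cases d; cases e; simp_all

def IsValid (d : DyadicIndex n) : Prop := (∀ i, d.pos i < 2 ^ d.level) ∧ d.time < 4 ^ d.level

def root : DyadicIndex n := ⟨0, 0, 0⟩

def ancestor (d : DyadicIndex n) (j : ℕ) : DyadicIndex n :=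
  ⟨j, fun i => d.pos i / 2 ^ (d.level - j), d.time / 4 ^ (d.level - j)⟩

def parent (d : DyadicIndex n) : DyadicIndex n := d.ancestor (d.level - 1)

@[simp]
lemma level_ancestor (d : DyadicIndex n) (j : ℕ) : (d.ancestor j).level = j := rfl

@[simp]
lemma ancestor_level (d : DyadicIndex n) : d.ancestor d.level = d := by
  ext <;> simp [ancestor]

lemma ancestor_ancestor (d : DyadicIndex n) {j k : ℕ} (hjk : j ≤ k) (hk : k ≤ d.level) :
    (d.ancestor k).ancestor j = d.ancestor j := by
  ext i <;> simp only [ancestor, Nat.div_div_eq_div_mul, ← pow_add] <;> congr 2 <;> omega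

lemma IsValid.ancestor {d : DyadicIndex n} (hd : d.IsValid) {j : ℕ} (hj : j ≤ d.level) :
    (d.ancestor j).IsValid := by
  have h2 : 2 ^ d.level = 2 ^ j * 2 ^ (d.level - j) := by rw [← pow_add]; congr 1; omega
  have h4 : 4 ^ d.level = 4 ^ j * 4 ^ (d.level - j) := by rw [← pow_add]; congr 1; omega
  refine ⟨fun i => Nat.div_lt_of_lt_mul ?_, Nat.div_lt_of_lt_mul ?_⟩
  · rw [mul_comm, level_ancestor, ← h2]; exact hd.1 i
  · rw [mul_comm, level_ancestor, ← h4]; exact hd.2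

lemma IsValid.eq_root {d : DyadicIndex n} (hd : d.IsValid) (h0 : d.level = 0) :
    d = root := by
  obtain ⟨hpos, htime⟩ := hd
  simp only [h0, pow_zero, Nat.lt_one_iff] at hpos htime
  ext <;> simp [root, h0, hpos, htime]

/-- `d ≤ e` when the cube of `e` is an ancestor of (or equal to) the cube of `d`. -/
instance : PartialOrder (DyadicIndex n) where
  le d e := e.level ≤ d.level ∧ d.ancestor e.level = e
  le_refl d := ⟨le_rfl, d.ancestor_level⟩
  le_trans d e f hde hef := ⟨hef.1.trans hde.1, by
    rw [← ancestor_ancestor d hef.1 hde.1, hde.2, hef.2]⟩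
  le_antisymm d e hde hed := by
    rw [← hde.2, le_antisymm hde.1 hed.1, ancestor_level]

lemma ancestor_le (d : DyadicIndex n) {j : ℕ} (hj : j ≤ d.level) : d ≤ d.ancestor j :=
  ⟨hj, rfl⟩

lemma finite_Ici (d : DyadicIndex n) : (Ici d).Finite :=
  ((finite_Iic d.level).image d.ancestor).subset fun e he => ⟨e.level, he.1, he.2⟩

lemma exists_le_maximal (S : Set (DyadicIndex n)) {d : DyadicIndex n} (hd : d ∈ S) :
    ∃ e, d ≤ e ∧ Maximal (· ∈ S) e := by
  obtain ⟨e, hde, he⟩ :=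
    (d.finite_Ici.inter_of_right S).exists_le_maximal ⟨hd, self_mem_Ici⟩
  exact ⟨e, hde, he.1.1, fun f hf hef => he.2 ⟨hf, hde.trans hef⟩ hef⟩

lemma le_parent (d : DyadicIndex n) : d ≤ d.parent := d.ancestor_le (Nat.sub_le _ _)

lemma parent_ne (d : DyadicIndex n) (h : d.level ≠ 0) : d.parent ≠ d := fun h' => by
  have := congrArg level h'
  simp only [parent, level_ancestor] at this
  omega

end DyadicIndex

namespace PCube

variable {n : ℕ}

def base (K : PCube n) : Set (Fin n → ℝ) := univ.pi fun i => Ioo (K.x i) (K.x i + K.h)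

lemma toSet_eq_prod (K : PCube n) : K.toSet = K.base ×ˢ Ioo K.t (K.t + K.h ^ 2) := by
  ext p; simp [toSet, base]

lemma stack_eq_prod (K : PCube n) (m : ℕ) :
    K.stack m = K.base ×ˢ Ioo (K.t + K.h ^ 2) (K.t + K.h ^ 2 + m * K.h ^ 2) := by
  ext p; simp [stack, base]

lemma measurableSet_toSet (K : PCube n) : MeasurableSet K.toSet := by
  rw [toSet_eq_prod]
  exact (MeasurableSet.univ_pi fun _ => measurableSet_Ioo).prod measurableSet_Ioo

lemma measurableSet_stack (K : PCube n) (m : ℕ) : MeasurableSet (K.stack m) := by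
  rw [stack_eq_prod]
  exact (MeasurableSet.univ_pi fun _ => measurableSet_Ioo).prod measurableSet_Ioo

lemma volume_toSet_lt_top (K : PCube n) : volume K.toSet < ∞ := by
  rw [toSet_eq_prod, Measure.volume_eq_prod, Measure.prod_prod, base, Real.volume_pi_Ioo,
    Real.volume_Ioo]
  exact ENNReal.mul_lt_top (ENNReal.prod_lt_top fun _ _ => ofReal_lt_top) ofReal_lt_top

lemma dist_lt_of_mem_toSet {K : PCube n} {p q : (Fin n → ℝ) × ℝ} (hp : p ∈ K.toSet)
    (hq : q ∈ K.toSet) : dist p q < max K.h (K.h ^ 2) := by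
  have hr : 0 < max K.h (K.h ^ 2) :=
    lt_max_of_lt_right (by linarith [hp.2.1, hp.2.2])
  rw [Prod.dist_eq, max_lt_iff]
  constructor
  · refine (dist_pi_lt_iff hr).2 fun i => lt_max_of_lt_left ?_
    rw [Real.dist_eq, abs_sub_lt_iff]
    constructor <;> linarith [(hp.1 i).1, (hp.1 i).2, (hq.1 i).1, (hq.1 i).2]
  · refine lt_max_of_lt_right ?_
    rw [Real.dist_eq, abs_sub_lt_iff]
    constructor <;> linarith [hp.2.1, hp.2.2, hq.2.1, hq.2.2]

noncomputable def timeLength (K : PCube n) (x : Fin n → ℝ) : ℝ :=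
  K.base.indicator (fun _ => K.h ^ 2) x

lemma preimage_mk_toSet (K : PCube n) (x : Fin n → ℝ) :
    Prod.mk x ⁻¹' K.toSet = Ioo K.t (K.t + K.timeLength x) := by
  by_cases hx : x ∈ K.base <;> simp [toSet_eq_prod, timeLength, hx]

lemma preimage_mk_stack (K : PCube n) (m : ℕ) (x : Fin n → ℝ) :
    Prod.mk x ⁻¹' K.stack m =
      Ioo (K.t + K.timeLength x) (K.t + K.timeLength x + m * K.timeLength x) := by
  by_cases hx : x ∈ K.base <;> simp [stack_eq_prod, timeLength, hx]

section Stacking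

variable {ι : Type*} [Countable ι]

/-- Fubini reduces this to `tsum_volume_Ioo_sdiff_iUnion_le` on every time line. -/
lemma tsum_volume_toSet_sdiff_iUnion_stack_le (K : ι → PCube n)
    (hK : Pairwise (Disjoint on fun i => (K i).toSet)) {m : ℕ} (hm : m ≠ 0) :
    ∑' i, volume ((K i).toSet \ ⋃ j, (K j).stack m) ≤
      (m : ℝ≥0∞)⁻¹ * volume (⋃ j, (K j).stack m) := by
  set U := ⋃ j, (K j).stack m
  have hU : MeasurableSet U := .iUnion fun j => (K j).measurableSet_stack m
  have hKU : ∀ i, MeasurableSet ((K i).toSet \ U) := fun i =>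
    (K i).measurableSet_toSet.diff hU
  have hslice : ∀ x, ∑' i, volume (Prod.mk x ⁻¹' ((K i).toSet \ U)) ≤
      (m : ℝ≥0∞)⁻¹ * volume (Prod.mk x ⁻¹' U) := fun x => by
    have hdisj : Pairwise (Disjoint on fun i => Ioo (K i).t ((K i).t + (K i).timeLength x)) :=
      fun i j hij => by
        simpa only [onFun, preimage_mk_toSet] using (hK hij).preimage (Prod.mk x)
    have h := tsum_volume_Ioo_sdiff_iUnion_le (Nat.cast_pos.2 (Nat.pos_of_ne_zero hm))
      (fun i => (K i).t) (fun i => (K i).timeLength x) hdisj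
    simpa only [U, ENNReal.ofReal_natCast, preimage_sdiff, preimage_iUnion, preimage_mk_toSet,
      preimage_mk_stack] using h
  simp only [Measure.volume_eq_prod, Measure.prod_apply (hKU _), Measure.prod_apply hU]
  rw [← lintegral_tsum fun i => (measurable_measure_prodMk_left (hKU i)).aemeasurable,
    ← lintegral_const_mul _ (measurable_measure_prodMk_left hU)]
  exact lintegral_mono hslice

lemma tsum_volume_toSet_le_volume_iUnion_stack (K : ι → PCube n)
    (hK : Pairwise (Disjoint on fun i => (K i).toSet)) {m : ℕ} (hm : m ≠ 0) :
    ∑' i, volume (K i).toSet ≤ (m + 1) / m * volume (⋃ j, (K j).stack m) := by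
  set U := ⋃ j, (K j).stack m
  have hU : MeasurableSet U := .iUnion fun j => (K j).measurableSet_stack m
  have hinter : ∑' i, volume ((K i).toSet ∩ U) ≤ volume U := by
    rw [← measure_iUnion (fun i j hij => (hK hij).mono inter_subset_left inter_subset_left)
      fun i => (K i).measurableSet_toSet.inter hU]
    exact measure_mono (iUnion_subset fun i => inter_subset_right)
  calc ∑' i, volume (K i).toSet
      = ∑' i, volume ((K i).toSet ∩ U) + ∑' i, volume ((K i).toSet \ U) := by
        rw [← ENNReal.tsum_add]
        exact tsum_congr fun i => (measure_inter_add_sdiff _ hU).symm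
    _ ≤ volume U + (m : ℝ≥0∞)⁻¹ * volume U :=
        add_le_add hinter (tsum_volume_toSet_sdiff_iUnion_stack_le K hK hm)
    _ = (m + 1) / m * volume U := by
        rw [ENNReal.add_div, ENNReal.div_self (by exact_mod_cast hm) (natCast_ne_top m),
          one_div, add_mul, one_mul]

end Stacking

section Dyadic

variable (Q : PCube n)

noncomputable def side (k : ℕ) : ℝ := Q.h / 2 ^ k

noncomputable def dyadic (d : DyadicIndex n) : PCube n :=
  ⟨fun i => Q.x i + d.pos i * Q.side d.level, Q.side d.level,
    Q.t + d.time * Q.side d.level ^ 2⟩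

noncomputable def spaceCoord (k : ℕ) (p : (Fin n → ℝ) × ℝ) (i : Fin n) : ℝ :=
  (p.1 i - Q.x i) / Q.side k

noncomputable def timeCoord (k : ℕ) (p : (Fin n → ℝ) × ℝ) : ℝ := (p.2 - Q.t) / Q.side k ^ 2

noncomputable def locate (p : (Fin n → ℝ) × ℝ) (k : ℕ) : DyadicIndex n :=
  ⟨k, fun i => ⌊Q.spaceCoord k p i⌋₊, ⌊Q.timeCoord k p⌋₊⟩

/-- `p` lies on no face of any dyadic subcube of `Q`. -/
def IsGeneric (p : (Fin n → ℝ) × ℝ) : Prop :=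
  (∀ k i (c : ℕ), Q.spaceCoord k p i ≠ c) ∧ ∀ k (c : ℕ), Q.timeCoord k p ≠ c

variable {Q}

lemma side_pos (hQ : 0 < Q.h) (k : ℕ) : 0 < Q.side k := by unfold side; positivity

lemma side_eq_pow_mul {j k : ℕ} (hjk : j ≤ k) : Q.side j = 2 ^ (k - j) * Q.side k := by
  rw [side, side, mul_div, ← pow_sub_mul_pow 2 hjk, mul_div_mul_left _ _ (by positivity)]

lemma side_pow_two_eq_pow_mul {j k : ℕ} (hjk : j ≤ k) :
    Q.side j ^ 2 = 4 ^ (k - j) * Q.side k ^ 2 := by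
  rw [side_eq_pow_mul hjk, mul_pow, ← pow_mul, mul_comm (k - j), pow_mul]
  norm_num

lemma dyadic_root : Q.dyadic DyadicIndex.root = Q := by
  simp [dyadic, DyadicIndex.root, side]

lemma mem_dyadic (hQ : 0 < Q.h) {d : DyadicIndex n} {p : (Fin n → ℝ) × ℝ} :
    p ∈ (Q.dyadic d).toSet ↔
      (∀ i, Q.spaceCoord d.level p i ∈ Ioo (d.pos i : ℝ) (d.pos i + 1)) ∧
        Q.timeCoord d.level p ∈ Ioo (d.time : ℝ) (d.time + 1) := by
  have hs := side_pos hQ d.level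
  simp only [spaceCoord, timeCoord, div_mem_Ioo_iff hs, div_mem_Ioo_iff (pow_pos hs 2)]
  rfl

lemma spaceCoord_eq_div {j k : ℕ} (hjk : j ≤ k) (p : (Fin n → ℝ) × ℝ) (i : Fin n) :
    Q.spaceCoord j p i = Q.spaceCoord k p i / (2 ^ (k - j) : ℕ) := by
  rw [spaceCoord, spaceCoord, side_eq_pow_mul hjk, div_div, Nat.cast_pow, Nat.cast_ofNat,
    mul_comm]

lemma timeCoord_eq_div {j k : ℕ} (hjk : j ≤ k) (p : (Fin n → ℝ) × ℝ) :
    Q.timeCoord j p = Q.timeCoord k p / (4 ^ (k - j) : ℕ) := by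
  rw [timeCoord, timeCoord, side_pow_two_eq_pow_mul hjk, div_div, Nat.cast_pow, Nat.cast_ofNat,
    mul_comm]

lemma dyadic_subset_ancestor (hQ : 0 < Q.h) (d : DyadicIndex n) {j : ℕ} (hj : j ≤ d.level) :
    (Q.dyadic d).toSet ⊆ (Q.dyadic (d.ancestor j)).toSet := by
  intro p hp
  rw [mem_dyadic hQ] at hp ⊢
  refine ⟨fun i => ?_, ?_⟩
  · rw [DyadicIndex.level_ancestor, spaceCoord_eq_div hj]
    exact div_natCast_mem_Ioo (by positivity) (hp.1 i)
  · rw [DyadicIndex.level_ancestor, timeCoord_eq_div hj]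
    exact div_natCast_mem_Ioo (by positivity) hp.2

lemma dyadic_mono (hQ : 0 < Q.h) {d e : DyadicIndex n} (hde : d ≤ e) :
    (Q.dyadic d).toSet ⊆ (Q.dyadic e).toSet :=
  hde.2 ▸ dyadic_subset_ancestor hQ d hde.1

lemma locate_eq_of_mem (hQ : 0 < Q.h) {d : DyadicIndex n} {p : (Fin n → ℝ) × ℝ}
    (hp : p ∈ (Q.dyadic d).toSet) : Q.locate p d.level = d := by
  rw [mem_dyadic hQ] at hp
  have hfloor : ∀ {a : ℕ} {u : ℝ}, u ∈ Ioo (a : ℝ) (a + 1) → ⌊u⌋₊ = a := fun hu =>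
    (Nat.floor_eq_iff ((Nat.cast_nonneg _).trans hu.1.le)).2 ⟨hu.1.le, hu.2⟩
  ext i
  · rfl
  · exact hfloor (hp.1 i)
  · exact hfloor hp.2

lemma ancestor_locate {j k : ℕ} (hjk : j ≤ k) (p : (Fin n → ℝ) × ℝ) :
    (Q.locate p k).ancestor j = Q.locate p j := by
  ext i
  · rfl
  · simp only [DyadicIndex.ancestor, locate, spaceCoord_eq_div hjk, Nat.floor_div_natCast]
  · simp only [DyadicIndex.ancestor, locate, timeCoord_eq_div hjk, Nat.floor_div_natCast]

lemma le_or_le_of_not_disjoint (hQ : 0 < Q.h) {d e : DyadicIndex n}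
    (h : ¬Disjoint (Q.dyadic d).toSet (Q.dyadic e).toSet) : d ≤ e ∨ e ≤ d := by
  obtain ⟨p, hpd, hpe⟩ := not_disjoint_iff.1 h
  have hd := locate_eq_of_mem hQ hpd
  have he := locate_eq_of_mem hQ hpe
  rcases le_total d.level e.level with hle | hle
  · exact Or.inr ⟨hle, by rw [← he, ancestor_locate hle, hd]⟩
  · exact Or.inl ⟨hle, by rw [← hd, ancestor_locate hle, he]⟩

lemma pairwise_disjoint_maximal (hQ : 0 < Q.h) (S : Set (DyadicIndex n)) :
    Pairwise (Disjoint on fun d : {d | Maximal (· ∈ S) d} => (Q.dyadic d).toSet) := by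
  intro d e hde
  by_contra h
  rcases le_or_le_of_not_disjoint hQ h with h' | h'
  · exact hde (Subtype.ext (le_antisymm h' (d.2.2 e.2.1 h')))
  · exact hde (Subtype.ext (le_antisymm (e.2.2 d.2.1 h') h'))

lemma isChild_dyadic_parent {d : DyadicIndex n} (hd : d.level ≠ 0) :
    (Q.dyadic d.parent).isChild (Q.dyadic d) := by
  obtain ⟨_ | k, a, b⟩ := d
  · exact absurd rfl hd
  have hs : Q.side k = 2 * Q.side (k + 1) := by rw [side_eq_pow_mul k.le_succ]; simp
  have ha : ∀ i, (a i : ℝ) = 2 * (a i / 2 : ℕ) + (a i % 2 : ℕ) := fun i => by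
    exact_mod_cast (Nat.div_add_mod (a i) 2).symm
  have hb : (b : ℝ) = 4 * (b / 4 : ℕ) + (b % 4 : ℕ) := by
    exact_mod_cast (Nat.div_add_mod b 4).symm
  refine ⟨fun i => ⟨a i % 2, Nat.mod_lt _ two_pos⟩, ⟨b % 4, Nat.mod_lt _ (by norm_num)⟩, ?_⟩
  simp only [dyadic, child, DyadicIndex.parent, DyadicIndex.ancestor, Nat.add_sub_cancel,
    Nat.add_sub_cancel_left, pow_one, hs, PCube.mk.injEq]
  refine ⟨funext fun i => ?_, by ring, ?_⟩
  · rw [ha i]; ring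
  · rw [hb]; ring

lemma reflTransGen_isChild_dyadic {d : DyadicIndex n} (hd : d.IsValid) :
    Relation.ReflTransGen isChild Q (Q.dyadic d) := by
  induction hk : d.level generalizing d with
  | zero => rw [hd.eq_root hk, dyadic_root]
  | succ k ih =>
    exact (ih (hd.ancestor (Nat.sub_le _ _)) (by simp [hk])).tail
      (isChild_dyadic_parent (by omega))

end Dyadic

section Density

variable {Q : PCube n}

lemma ae_isGeneric (hQ : 0 < Q.h) : ∀ᵐ p ∂volume, Q.IsGeneric p := by
  simp only [IsGeneric, Filter.eventually_and, ae_all_iff]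
  refine ⟨fun k i c => ?_, fun k c => ?_⟩
  · have hs := side_pos hQ k
    filter_upwards [Measure.quasiMeasurePreserving_fst.ae
      (Measure.ae_eval_ne (fun _ => volume) i (Q.x i + c * Q.side k))] with p hp h
    rw [spaceCoord, div_eq_iff hs.ne'] at h
    exact hp (by linarith)
  · have hs := pow_pos (side_pos hQ k) 2
    filter_upwards [Measure.quasiMeasurePreserving_snd.ae
      (Measure.ae_ne volume (Q.t + c * Q.side k ^ 2))] with p hp h
    rw [timeCoord, div_eq_iff hs.ne'] at h
    exact hp (by linarith)

lemma coord_mem_Ioo (hQ : 0 < Q.h) {p : (Fin n → ℝ) × ℝ} (hp : p ∈ Q.toSet) (k : ℕ) :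
    (∀ i, Q.spaceCoord k p i ∈ Ioo 0 (2 ^ k)) ∧ Q.timeCoord k p ∈ Ioo 0 (4 ^ k) := by
  have hs := side_pos hQ k
  have hQs : 2 ^ k * Q.side k = Q.h := by rw [side, mul_div_cancel₀ _ (by positivity)]
  have hQs2 : 4 ^ k * Q.side k ^ 2 = Q.h ^ 2 := by
    rw [← hQs, mul_pow, ← pow_mul, mul_comm k, pow_mul]; norm_num
  refine ⟨fun i => ⟨div_pos (sub_pos.2 (hp.1 i).1) hs, ?_⟩,
    ⟨div_pos (sub_pos.2 hp.2.1) (pow_pos hs 2), ?_⟩⟩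
  · rw [spaceCoord, div_lt_iff₀ hs, hQs]; linarith [(hp.1 i).2]
  · rw [timeCoord, div_lt_iff₀ (pow_pos hs 2), hQs2]; linarith [hp.2.2]

lemma mem_dyadic_locate (hQ : 0 < Q.h) {p : (Fin n → ℝ) × ℝ} (hpQ : p ∈ Q.toSet)
    (hp : Q.IsGeneric p) (k : ℕ) : p ∈ (Q.dyadic (Q.locate p k)).toSet := by
  rw [mem_dyadic hQ]
  exact ⟨fun i => mem_Ioo_floor ((coord_mem_Ioo hQ hpQ k).1 i).1.le (hp.1 k i _),
    mem_Ioo_floor (coord_mem_Ioo hQ hpQ k).2.1.le (hp.2 k _)⟩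

lemma isValid_locate (hQ : 0 < Q.h) {p : (Fin n → ℝ) × ℝ} (hpQ : p ∈ Q.toSet) (k : ℕ) :
    (Q.locate p k).IsValid := by
  obtain ⟨hspace, htime⟩ := coord_mem_Ioo hQ hpQ k
  refine ⟨fun i => (Nat.floor_lt (hspace i).1.le).2 ?_, (Nat.floor_lt htime.1.le).2 ?_⟩
  · exact_mod_cast (hspace i).2
  · exact_mod_cast htime.2

lemma exists_side_lt {r : ℝ} (hr : 0 < r) : ∃ k, Q.side k < r := by
  obtain ⟨k, hk⟩ := pow_unbounded_of_one_lt (Q.h / r) one_lt_two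
  exact ⟨k, (div_lt_iff₀ (by positivity)).2 (by rwa [div_lt_iff₀ hr, mul_comm] at hk)⟩

lemma exists_dyadic_locate_subset (hQ : 0 < Q.h) {p : (Fin n → ℝ) × ℝ} (hpQ : p ∈ Q.toSet)
    (hp : Q.IsGeneric p) {U : Set ((Fin n → ℝ) × ℝ)} (hU : IsOpen U) (hpU : p ∈ U) :
    ∃ k, (Q.dyadic (Q.locate p k)).toSet ⊆ U := by
  obtain ⟨ε, hε, hball⟩ := Metric.isOpen_iff.1 hU p hpU
  obtain ⟨k, hk⟩ := exists_side_lt (Q := Q) (lt_min hε one_pos)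
  have hs := side_pos hQ k
  have hsε : Q.side k < ε := hk.trans_le (min_le_left _ _)
  have hs2 : Q.side k ^ 2 < ε := by nlinarith [min_le_right ε 1]
  refine ⟨k, fun q hq => hball ?_⟩
  calc dist q p < max (Q.side k) (Q.side k ^ 2) :=
        dist_lt_of_mem_toSet hq (mem_dyadic_locate hQ hpQ hp k)
    _ < ε := max_lt hsε hs2

lemma volume_le_mul_volume_of_isOpen (hQ : 0 < Q.h) {A : Set ((Fin n → ℝ) × ℝ)}
    (hAQ : A ⊆ Q.toSet) {δ : ℝ≥0∞}
    (hA : ∀ d : DyadicIndex n, d.IsValid →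
      volume ((Q.dyadic d).toSet ∩ A) ≤ δ * volume (Q.dyadic d).toSet)
    {U : Set ((Fin n → ℝ) × ℝ)} (hU : IsOpen U) (hAU : A ⊆ U) : volume A ≤ δ * volume U := by
  set S := {d : DyadicIndex n | d.IsValid ∧ (Q.dyadic d).toSet ⊆ U}
  set M := {d | Maximal (· ∈ S) d}
  have hcover : A ≤ᵐ[volume] ⋃ d : M, (Q.dyadic d).toSet := by
    filter_upwards [ae_isGeneric hQ] with p hp hpA
    obtain ⟨k, hk⟩ := exists_dyadic_locate_subset hQ (hAQ hpA) hp hU (hAU hpA)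
    obtain ⟨e, hle, he⟩ :=
      DyadicIndex.exists_le_maximal S ⟨isValid_locate hQ (hAQ hpA) k, hk⟩
    exact mem_iUnion.2 ⟨⟨e, he⟩, dyadic_mono hQ hle (mem_dyadic_locate hQ (hAQ hpA) hp k)⟩
  calc volume A ≤ δ * ∑' d : M, volume (Q.dyadic d).toSet :=
        measure_le_mul_tsum_of_ae_subset_iUnion hcover fun d => hA d d.2.1.1
    _ = δ * volume (⋃ d : M, (Q.dyadic d).toSet) := by
        rw [measure_iUnion (pairwise_disjoint_maximal hQ S) fun d => measurableSet_toSet _]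
    _ ≤ δ * volume U := by gcongr; exact iUnion_subset fun d => d.2.1.2

lemma volume_eq_zero_of_forall_dyadic_le (hQ : 0 < Q.h) {A : Set ((Fin n → ℝ) × ℝ)}
    (hAQ : A ⊆ Q.toSet) {δ : ℝ≥0∞} (hδ : δ < 1)
    (hA : ∀ d : DyadicIndex n, d.IsValid →
      volume ((Q.dyadic d).toSet ∩ A) ≤ δ * volume (Q.dyadic d).toSet) :
    volume A = 0 := by
  have hfin : volume A ≠ ∞ := ((measure_mono hAQ).trans_lt Q.volume_toSet_lt_top).ne
  have hle : volume A ≤ δ * volume A := by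
    refine ENNReal.le_of_forall_pos_le_add fun ε hε _ => ?_
    obtain ⟨U, hAU, hU, hUA⟩ := Set.exists_isOpen_lt_of_lt A (volume A + ε)
      (ENNReal.lt_add_right hfin (by simpa using hε.ne'))
    calc volume A ≤ δ * volume U := volume_le_mul_volume_of_isOpen hQ hAQ hA hU hAU
      _ ≤ δ * (volume A + ε) := by gcongr
      _ ≤ δ * volume A + ε := by
          rw [mul_add]; gcongr; exact mul_le_of_le_one_left' hδ.le
  by_contra h0
  exact (ENNReal.mul_lt_mul_left h0 hfin hδ).not_ge (by rwa [one_mul])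

end Density

section Selection

def heavy (Q : PCube n) (A : Set ((Fin n → ℝ) × ℝ)) (δ : ℝ≥0∞) : Set (DyadicIndex n) :=
  {d | d.IsValid ∧ δ * volume (Q.dyadic d).toSet < volume ((Q.dyadic d).toSet ∩ A)}

def stoppingParents (Q : PCube n) (A : Set ((Fin n → ℝ) × ℝ)) (δ : ℝ≥0∞) :
    Set (DyadicIndex n) :=
  DyadicIndex.parent '' Q.heavy A δ \ Q.heavy A δ

def stoppingCubes (Q : PCube n) (A : Set ((Fin n → ℝ) × ℝ)) (δ : ℝ≥0∞) :
    Set (DyadicIndex n) :=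
  {f | Maximal (· ∈ Q.stoppingParents A δ) f}

variable {Q : PCube n} {A : Set ((Fin n → ℝ) × ℝ)} {δ : ℝ≥0∞}

lemma volume_sdiff_iUnion_heavy (hQ : 0 < Q.h) (hAQ : A ⊆ Q.toSet) (hδ : δ < 1) :
    volume (A \ ⋃ d ∈ Q.heavy A δ, (Q.dyadic d).toSet) = 0 := by
  refine volume_eq_zero_of_forall_dyadic_le hQ (sdiff_subset.trans hAQ) hδ fun d hd => ?_
  by_cases hheavy : d ∈ Q.heavy A δ
  · have hempty : (Q.dyadic d).toSet ∩ (A \ ⋃ d ∈ Q.heavy A δ, (Q.dyadic d).toSet) = ∅ :=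
      eq_empty_of_forall_notMem fun p hp => hp.2.2 (mem_biUnion hheavy hp.1)
    simp [hempty]
  · exact (measure_mono (inter_subset_inter_right _ sdiff_subset)).trans
      (not_lt.1 fun h => hheavy ⟨hd, h⟩)

lemma level_ne_zero_of_mem_heavy (hAQ : A ⊆ Q.toSet) (hroot : volume A ≤ δ * volume Q.toSet)
    {d : DyadicIndex n} (hd : d ∈ Q.heavy A δ) : d.level ≠ 0 := fun h0 => by
  have hd' := hd.2
  rw [hd.1.eq_root h0, dyadic_root, inter_eq_right.2 hAQ] at hd'
  exact hd'.not_ge hroot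

lemma exists_le_mem_stoppingParents (hAQ : A ⊆ Q.toSet)
    (hroot : volume A ≤ δ * volume Q.toSet) {d : DyadicIndex n} (hd : d ∈ Q.heavy A δ) :
    ∃ e ∈ Q.stoppingParents A δ, d ≤ e := by
  obtain ⟨e, hde, he⟩ := DyadicIndex.exists_le_maximal _ hd
  refine ⟨e.parent, ⟨mem_image_of_mem _ he.1, fun hp => ?_⟩, hde.trans e.le_parent⟩
  exact e.parent_ne (level_ne_zero_of_mem_heavy hAQ hroot he.1)
    (le_antisymm (he.2 hp e.le_parent) e.le_parent)

lemma ae_subset_iUnion_stoppingCubes (hQ : 0 < Q.h) (hAQ : A ⊆ Q.toSet) (hδ : δ < 1)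
    (hroot : volume A ≤ δ * volume Q.toSet) :
    A ≤ᵐ[volume] ⋃ f : Q.stoppingCubes A δ, (Q.dyadic f).toSet := by
  refine ae_le_set.2 (measure_mono_null ?_ (volume_sdiff_iUnion_heavy hQ hAQ hδ))
  rintro p ⟨hpA, hpF⟩
  refine ⟨hpA, fun hN => hpF ?_⟩
  obtain ⟨d, hd, hpd⟩ := mem_iUnion₂.1 hN
  obtain ⟨e, he, hde⟩ := exists_le_mem_stoppingParents hAQ hroot hd
  obtain ⟨f, hef, hf⟩ := DyadicIndex.exists_le_maximal _ he
  exact mem_iUnion.2 ⟨⟨f, hf⟩, dyadic_mono hQ (hde.trans hef) hpd⟩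

lemma volume_inter_le_of_mem_stoppingParents {f : DyadicIndex n}
    (hf : f ∈ Q.stoppingParents A δ) :
    volume ((Q.dyadic f).toSet ∩ A) ≤ δ * volume (Q.dyadic f).toSet := by
  obtain ⟨⟨d, hd, rfl⟩, hf⟩ := hf
  exact not_lt.1 fun h => hf ⟨hd.1.ancestor (Nat.sub_le _ _), h⟩

lemma stack_subset_of_mem_stoppingParents (hAQ : A ⊆ Q.toSet)
    (hroot : volume A ≤ δ * volume Q.toSet) {m : ℕ} {B : Set ((Fin n → ℝ) × ℝ)}
    (hCZ : ∀ P K : PCube n, Relation.ReflTransGen isChild Q P → P.isChild K →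
      δ * volume K.toSet < volume (K.toSet ∩ A) → P.stack m ⊆ B)
    {f : DyadicIndex n} (hf : f ∈ Q.stoppingParents A δ) : (Q.dyadic f).stack m ⊆ B := by
  obtain ⟨⟨d, hd, rfl⟩, -⟩ := hf
  exact hCZ _ _ (reflTransGen_isChild_dyadic (hd.1.ancestor (Nat.sub_le _ _)))
    (isChild_dyadic_parent (level_ne_zero_of_mem_heavy hAQ hroot hd)) hd.2

end Selection

end PCube

theorem stmt3_general (n m : ℕ) (hm : 1 ≤ m) (Q : PCube n) (hQ : 0 < Q.h)
    (A B : Set ((Fin n → ℝ) × ℝ))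
    (hAQ : A ⊆ Q.toSet)
    (δ : ℝ) (hδ1 : δ < 1)
    (hA : volume A ≤ ENNReal.ofReal δ * volume Q.toSet)
    (hCZ : ∀ P K : PCube n, Relation.ReflTransGen PCube.isChild Q P → P.isChild K →
      ENNReal.ofReal δ * volume K.toSet < volume (K.toSet ∩ A) → P.stack m ⊆ B) :
    volume A ≤ ENNReal.ofReal ((m + 1) / m * δ) * volume B := by
  have hδ : ENNReal.ofReal δ < 1 := ENNReal.ofReal_lt_one.2 hδ1
  set F := Q.stoppingCubes A (ENNReal.ofReal δ)
  calc volume A ≤ ENNReal.ofReal δ * ∑' f : F, volume (Q.dyadic f).toSet :=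
        measure_le_mul_tsum_of_ae_subset_iUnion
          (PCube.ae_subset_iUnion_stoppingCubes hQ hAQ hδ hA)
          fun f => PCube.volume_inter_le_of_mem_stoppingParents f.2.1
    _ ≤ ENNReal.ofReal δ * ((m + 1) / m * volume (⋃ f : F, (Q.dyadic f).stack m)) := by
        gcongr
        exact PCube.tsum_volume_toSet_le_volume_iUnion_stack _
          (PCube.pairwise_disjoint_maximal hQ _) (by omega)
    _ ≤ ENNReal.ofReal δ * ((m + 1) / m * volume B) := by
        gcongr
        exact iUnion_subset fun f =>
          PCube.stack_subset_of_mem_stoppingParents hAQ hA hCZ f.2.1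
    _ = ENNReal.ofReal ((m + 1) / m * δ) * volume B := by
        rw [ENNReal.ofReal_mul (by positivity), ENNReal.ofReal_div_of_pos (by positivity),
          ENNReal.ofReal_add (by positivity) zero_le_one, ENNReal.ofReal_natCast,
          ENNReal.ofReal_one]
        ring

/-- Parabolic Calderón–Zygmund stacking lemma: if `A, B ⊆ Q` with `|A| ≤ δ|Q|`, and for
every parabolic dyadic subcube `K` of `Q` (with predecessor `K̄`) the inequality
`|K ∩ A| > δ|K|` forces `K̄^m ⊆ B`, then `|A| ≤ ((m+1)/m) δ |B|`. -/
theorem stmt3 (n m : ℕ) (hm : 1 ≤ m) (Q : PCube n) (hQ : 0 < Q.h)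
    (A B : Set ((Fin n → ℝ) × ℝ)) (hAm : MeasurableSet A) (hBm : MeasurableSet B)
    (hAQ : A ⊆ Q.toSet) (hBQ : B ⊆ Q.toSet)
    (δ : ℝ) (hδ0 : 0 < δ) (hδ1 : δ < 1)
    (hA : volume A ≤ ENNReal.ofReal δ * volume Q.toSet)
    (hCZ : ∀ P K : PCube n, Relation.ReflTransGen PCube.isChild Q P → P.isChild K →
      ENNReal.ofReal δ * volume K.toSet < volume (K.toSet ∩ A) → P.stack m ⊆ B) :
    volume A ≤ ENNReal.ofReal ((m + 1) / m * δ) * volume B :=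
  stmt3_general n m hm Q hQ A B hAQ δ hδ1 hA hCZ
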